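/- Time-integral modular estimate: let M* be an N-function satisfying the Δ₂-condition with constant c and function h ∈ L¹(Ω), h ≥ 0, let T > 0 and d ∈ ℕ with 2^d ≥ T, and let g : Q → S³ be measurable with ∫_Q M*(x, g(x,t)) dx dt < ∞. Then there is a constant C(d) depending only on d and c such that ∫_Q M*(x, ∫₀ᵗ g(x,s) ds) dx dt ≤ c^d ∫_Q M*(x, g(x,t)) dx dt + C(d) ∫_Ω h(x) dx. -/

import Mathlib

open MeasureTheory Filter Set Topology

noncomputable section

/-- `ℝ³`, the ambient space of the material body `Ω`. -/
abbrev E3 := EuclideanSpace ℝ (Fin 3)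

/-- `3 × 3` real matrices. -/
abbrev Mat3 := Matrix (Fin 3) (Fin 3) ℝ

instance : MeasurableSpace Mat3 := inferInstanceAs (MeasurableSpace (Fin 3 → Fin 3 → ℝ))

/-- The Frobenius inner product `ξ : η` on matrices. -/
def mdot (ξ η : Mat3) : ℝ := ∑ i, ∑ j, ξ i j * η i j

/-- The Frobenius norm `|ξ|` of a matrix. -/
def mnorm (ξ : Mat3) : ℝ := Real.sqrt (mdot ξ ξ)

/-- `S³`: the set of symmetric `3 × 3` real matrices. -/
def Sym3 : Set Mat3 := {A | A.IsSymm}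

/-- `S³_d`: the set of symmetric traceless `3 × 3` real matrices. -/
def Sym3d : Set Mat3 := {A | A.IsSymm ∧ A.trace = 0}

/-- `M : Ω × S³ → [0,∞)` is an `N`-function: Carathéodory (measurable in `x`,
continuous in `ξ`), vanishing exactly at `0`, even, convex in `ξ`, with
`M(x,ξ)/|ξ| → 0` as `|ξ| → 0` and `M(x,ξ)/|ξ| → ∞` as `|ξ| → ∞`. -/
structure IsNFunction (Ω : Set E3) (M : E3 → Mat3 → ℝ) : Prop where
  nonneg : ∀ x ξ, 0 ≤ M x ξ
  meas : ∀ ξ, Measurable fun x => M x ξ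
  cont : ∀ x, ContinuousOn (M x) Sym3
  zero_iff : ∀ x ∈ Ω, ∀ ξ ∈ Sym3, (M x ξ = 0 ↔ ξ = 0)
  even : ∀ x ∈ Ω, ∀ ξ ∈ Sym3, M x (-ξ) = M x ξ
  convexOn : ∀ x, ConvexOn ℝ Sym3 (M x)
  tendsto_zero : ∀ x ∈ Ω,
    Tendsto (fun ξ => M x ξ / mnorm ξ) (nhdsWithin 0 (Sym3 \ {0})) (nhds 0)
  tendsto_top : ∀ x ∈ Ω,
    Tendsto (fun ξ => M x ξ / mnorm ξ) ((comap mnorm atTop) ⊓ Filter.principal Sym3) atTop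

/-- The complementary function `M*(x,η) = sup_{ξ ∈ S³} (ξ:η − M(x,ξ))`. -/
def complFn (M : E3 → Mat3 → ℝ) (x : E3) (η : Mat3) : ℝ :=
  ⨆ ξ : Sym3, (mdot ξ.1 η - M x ξ.1)

/-!
Fix `x ∈ Ω` and `t ∈ (0, T)`. Then `∫₀ᵗ g = (T / 2 ^ d) • 2 ^ d • A` with `A` the average over
`(0, T)` of `g` cut off after time `t`. As `M*(x, ·)` is convex with `M*(x, 0) = 0` and
`T ≤ 2 ^ d`, the factor `T / 2 ^ d` can be dropped; `d` doublings give
`M*(x, 2 ^ d • A) ≤ c ^ d M*(x, A) + (1 + c + ⋯ + c ^ (d - 1)) h(x)`; and Jensen's inequality gives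
`M*(x, A) ≤ T⁻¹ ∫₀ᵀ M*(x, g)`. Integrating over `t ∈ (0, T)` and then over `x ∈ Ω` yields the
estimate with `C(d) = 2 ^ d (1 + c' + ⋯ + c' ^ (d - 1))`, where `c' = max c 0`.
-/

open scoped ENNReal

section DeltaTwo

variable {E : Type*} {s : Set E} {φ : E → ℝ} {c b : ℝ}

theorem le_pow_mul_add_geom_sum_of_two_smul_le [AddCommGroup E] [Module ℝ E] (hc : 0 ≤ c)
    (hs : ∀ ξ ∈ s, (2 : ℝ) • ξ ∈ s) (hΔ : ∀ ξ ∈ s, φ ((2 : ℝ) • ξ) ≤ c * φ ξ + b) (k : ℕ) :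
    ∀ v ∈ s, φ ((2 : ℝ) ^ k • v) ≤ c ^ k * φ v + (∑ i ∈ Finset.range k, c ^ i) * b := by
  induction k with
  | zero => simp
  | succ k ih =>
    intro v hv
    calc φ ((2 : ℝ) ^ (k + 1) • v) = φ ((2 : ℝ) ^ k • (2 : ℝ) • v) := by rw [pow_succ, mul_smul]
      _ ≤ c ^ k * φ ((2 : ℝ) • v) + (∑ i ∈ Finset.range k, c ^ i) * b := ih _ (hs v hv)
      _ ≤ c ^ k * (c * φ v + b) + (∑ i ∈ Finset.range k, c ^ i) * b := by
        gcongr; exact hΔ v hv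
      _ = c ^ (k + 1) * φ v + (∑ i ∈ Finset.range (k + 1), c ^ i) * b := by
        rw [Finset.sum_range_succ]; ring

theorem ConvexOn.map_smul_le [AddCommGroup E] [Module ℝ E] (hφ : ConvexOn ℝ s φ) (h0 : 0 ∈ s)
    (hφ0 : φ 0 = 0) {v : E} (hv : v ∈ s) (hφv : 0 ≤ φ v) {a : ℝ} (ha₀ : 0 ≤ a) (ha₁ : a ≤ 1) :
    φ (a • v) ≤ φ v := by
  have h := hφ.2 hv h0 ha₀ (sub_nonneg.mpr ha₁) (add_sub_cancel a 1)
  simp only [smul_zero, add_zero, hφ0, smul_eq_mul] at h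
  nlinarith

theorem ConvexOn.map_integral_le_of_two_smul_le [NormedAddCommGroup E] [NormedSpace ℝ E]
    [CompleteSpace E] {α : Type*} [MeasurableSpace α] {μ : Measure α} [IsFiniteMeasure μ]
    [NeZero μ] (hφ : ConvexOn ℝ s φ) (hφc : ContinuousOn φ s) (hsc : IsClosed s) (h0 : 0 ∈ s)
    (hφ0 : φ 0 = 0) (hφnn : ∀ ξ ∈ s, 0 ≤ φ ξ) (hc : 0 ≤ c) (hs : ∀ ξ ∈ s, (2 : ℝ) • ξ ∈ s)
    (hΔ : ∀ ξ ∈ s, φ ((2 : ℝ) • ξ) ≤ c * φ ξ + b) {d : ℕ} (hμ : μ.real univ ≤ 2 ^ d)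
    {f : α → E} (hfs : ∀ᵐ x ∂μ, f x ∈ s) (hfi : Integrable f μ) (hφf : Integrable (φ ∘ f) μ) :
    φ (∫ x, f x ∂μ) ≤ c ^ d * ⨍ x, φ (f x) ∂μ + (∑ i ∈ Finset.range d, c ^ i) * b := by
  set A := ⨍ x, f x ∂μ
  have hA : A ∈ s := hφ.1.average_mem hsc hfs hfi
  have hAd : ∀ k : ℕ, (2 : ℝ) ^ k • A ∈ s := by
    intro k
    induction k with
    | zero => simpa using hA
    | succ k ih => rw [pow_succ', mul_smul]; exact hs _ ih
  have hm : 0 < μ.real univ := measureReal_univ_pos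
  have hint : ∫ x, f x ∂μ = (μ.real univ / 2 ^ d) • (2 : ℝ) ^ d • A := by
    rw [smul_smul, div_mul_cancel₀ _ (by positivity), show A = _ from average_eq μ f, smul_smul,
      mul_inv_cancel₀ hm.ne', one_smul]
  calc φ (∫ x, f x ∂μ) ≤ φ ((2 : ℝ) ^ d • A) := by
        rw [hint]
        exact hφ.map_smul_le h0 hφ0 (hAd d) (hφnn _ (hAd d)) (by positivity)
          ((div_le_one (by positivity)).mpr hμ)
    _ ≤ c ^ d * φ A + (∑ i ∈ Finset.range d, c ^ i) * b :=
        le_pow_mul_add_geom_sum_of_two_smul_le hc hs hΔ d A hA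
    _ ≤ c ^ d * ⨍ x, φ (f x) ∂μ + (∑ i ∈ Finset.range d, c ^ i) * b := by
        gcongr; exact hφ.map_average_le hφc hsc hfs hfi hφf

end DeltaTwo

theorem exists_le_add_of_tendsto_div_atTop {α : Type*} {N φ : α → ℝ} {s : Set α}
    (hφ : ∀ ξ ∈ s, 0 ≤ φ ξ) (h : Tendsto (fun ξ => φ ξ / N ξ) (comap N atTop ⊓ 𝓟 s) atTop) :
    ∃ R, ∀ ξ ∈ s, N ξ ≤ R + φ ξ := by
  obtain ⟨R, hR⟩ := eventually_atTop.mp <| eventually_comap.mp <|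
    eventually_inf_principal.mp (h.eventually (eventually_ge_atTop 1))
  refine ⟨max R 1, fun ξ hξ => ?_⟩
  rcases le_or_gt (max R 1) (N ξ) with hN | hN
  · have hpos : 0 < N ξ := zero_lt_one.trans_le ((le_max_right _ _).trans hN)
    have := (one_le_div hpos).mp (hR _ ((le_max_left _ _).trans hN) ξ rfl hξ)
    linarith [le_max_right R 1]
  · linarith [hφ ξ hξ]

theorem setLIntegral_prod_le_of_ae_le {α β : Type*} [MeasurableSpace α] [MeasurableSpace β]
    {μ : Measure α} {ν : Measure β} [SFinite μ] [SFinite ν] {s : Set α} {t : Set β}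
    {F G : α × β → ℝ≥0∞} (hG : AEMeasurable G ((μ.prod ν).restrict (s ×ˢ t)))
    (hGfin : ∫⁻ z in s ×ˢ t, G z ∂μ.prod ν ≠ ⊤) {a : ℝ≥0∞} {k : α → ℝ≥0∞}
    (hFG : ∀ᵐ x ∂μ.restrict s, ∫⁻ y in t, G (x, y) ∂ν < ⊤ →
      ∫⁻ y in t, F (x, y) ∂ν ≤ a * ∫⁻ y in t, G (x, y) ∂ν + k x) :
    ∫⁻ z in s ×ˢ t, F z ∂μ.prod ν ≤ a * ∫⁻ z in s ×ˢ t, G z ∂μ.prod ν + ∫⁻ x in s, k x ∂μ := by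
  rw [← Measure.prod_restrict] at hG hGfin ⊢
  have hJ := hG.lintegral_prod_right'
  rw [lintegral_prod _ hG] at hGfin ⊢
  have hJfin := ae_lt_top' hJ hGfin
  calc ∫⁻ z, F z ∂(μ.restrict s).prod (ν.restrict t)
      ≤ ∫⁻ x in s, ∫⁻ y in t, F (x, y) ∂ν ∂μ := lintegral_prod_le F
    _ ≤ ∫⁻ x in s, (a * ∫⁻ y in t, G (x, y) ∂ν + k x) ∂μ := by
        refine lintegral_mono_ae ?_
        filter_upwards [hFG, hJfin] with x hx hxfin using hx hxfin
    _ = a * ∫⁻ x in s, ∫⁻ y in t, G (x, y) ∂ν ∂μ + ∫⁻ x in s, k x ∂μ := by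
        rw [lintegral_add_left' (hJ.const_mul a), lintegral_const_mul'' a hJ]

attribute [local instance] Matrix.normedAddCommGroup Matrix.normedSpace

instance : BorelSpace Mat3 := inferInstanceAs (BorelSpace (Fin 3 → Fin 3 → ℝ))

instance : SecondCountableTopology Mat3 :=
  inferInstanceAs (SecondCountableTopology (Fin 3 → Fin 3 → ℝ))

-- Not found by instance search: the topology of `Matrix.normedAddCommGroup` is not reducibly the
-- instance topology of matrices.
instance : ContinuousENorm Mat3 := SeminormedAddGroup.toContinuousENorm

theorem zero_mem_sym3 : (0 : Mat3) ∈ Sym3 := Matrix.isSymm_zero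

theorem two_smul_mem_sym3 {A : Mat3} (hA : A ∈ Sym3) : (2 : ℝ) • A ∈ Sym3 :=
  Matrix.IsSymm.smul hA 2

theorem isClosed_sym3 : IsClosed Sym3 :=
  isClosed_eq continuous_id.matrix_transpose continuous_id

theorem norm_le_mnorm (ξ : Mat3) : ‖ξ‖ ≤ mnorm ξ := by
  refine (Matrix.norm_le_iff (Real.sqrt_nonneg _)).mpr fun j k => Real.abs_le_sqrt ?_
  calc ξ j k ^ 2 = ξ j k * ξ j k := sq _
    _ ≤ ∑ l, ξ j l * ξ j l :=
        Finset.single_le_sum (f := fun l => ξ j l * ξ j l) (fun _ _ => mul_self_nonneg _)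
          (Finset.mem_univ k)
    _ ≤ mdot ξ ξ :=
        Finset.single_le_sum (f := fun i => ∑ l, ξ i l * ξ i l)
          (fun _ _ => Finset.sum_nonneg fun _ _ => mul_self_nonneg _) (Finset.mem_univ j)

theorem ContinuousOn.measurable_comp_sym3 {φ : Mat3 → ℝ} (hφ : ContinuousOn φ Sym3)
    {γ : Type*} [MeasurableSpace γ] {F : γ → Mat3} (hF : Measurable F) (hFs : ∀ z, F z ∈ Sym3) :
    Measurable fun z => φ (F z) :=
  (continuousOn_iff_continuous_domRestrict.mp hφ).measurable.comp (hF.subtype_mk (h := hFs))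

theorem measurable_caratheodory_comp {α γ : Type*} [MeasurableSpace α] [MeasurableSpace γ]
    {M : α → Mat3 → ℝ} (hmeas : ∀ ξ, Measurable fun x => M x ξ)
    (hcont : ∀ x, ContinuousOn (M x) Sym3) {x : γ → α} (hx : Measurable x) {F : γ → Mat3}
    (hF : Measurable F) (hFs : ∀ z, F z ∈ Sym3) : Measurable fun z => M (x z) (F z) := by
  have hM : Measurable (Function.uncurry fun (σ : Sym3) x => M x σ) :=
    measurable_uncurry_of_continuous_of_measurable
      (fun x => continuousOn_iff_continuous_domRestrict.mp (hcont x)) (fun σ => hmeas σ)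
  exact hM.comp ((hF.subtype_mk (h := hFs)).prodMk hx)

theorem integral_mat3_apply {α : Type*} [MeasurableSpace α] {μ : Measure α} {f : α → Mat3}
    (hf : Integrable f μ) (j k : Fin 3) : (∫ x, f x ∂μ) j k = ∫ x, f x j k ∂μ := by
  let entry : Mat3 →L[ℝ] ℝ := (ContinuousLinearMap.proj (R := ℝ) (φ := fun _ : Fin 3 => ℝ) k).comp
    (ContinuousLinearMap.proj (R := ℝ) (φ := fun _ : Fin 3 => Fin 3 → ℝ) j)
  exact (entry.integral_comp_comm hf).symm

theorem of_intervalIntegral_eq_setIntegral {G : ℝ → Mat3} {t : ℝ} (ht : 0 ≤ t)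
    (hG : IntegrableOn G (Ioc 0 t)) :
    Matrix.of (fun j k => ∫ s in (0 : ℝ)..t, G s j k) = ∫ s in Ioc 0 t, G s := by
  ext j k
  rw [integral_mat3_apply hG, Matrix.of_apply, intervalIntegral.integral_of_le ht]

section Fibre

variable {φ : Mat3 → ℝ} {c b T : ℝ} {d : ℕ} {G : ℝ → Mat3}

theorem modular_intervalIntegral_le (hφ : ConvexOn ℝ Sym3 φ) (hφc : ContinuousOn φ Sym3)
    (hφ0 : φ 0 = 0) (hφnn : ∀ ξ, 0 ≤ φ ξ) (hc : 0 ≤ c)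
    (hΔ : ∀ ξ ∈ Sym3, φ ((2 : ℝ) • ξ) ≤ c * φ ξ + b) (hTd : T ≤ 2 ^ d) (hGs : ∀ s, G s ∈ Sym3)
    (hGi : IntegrableOn G (Ioo 0 T)) (hφG : IntegrableOn (φ ∘ G) (Ioo 0 T)) {t : ℝ}
    (ht : t ∈ Ioo 0 T) :
    φ (Matrix.of fun j k => ∫ s in (0 : ℝ)..t, G s j k) ≤
      c ^ d * (T⁻¹ * ∫ s in Ioo 0 T, φ (G s)) + (∑ i ∈ Finset.range d, c ^ i) * b := by
  have hT : 0 < T := ht.1.trans ht.2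
  have : NeZero (volume.restrict (Ioo 0 T)) := ⟨by simpa using hT⟩
  have hsub : Ioc 0 t ⊆ Ioo 0 T := fun s hs => ⟨hs.1, hs.2.trans_lt ht.2⟩
  set f := (Ioc 0 t).indicator G
  have hfs : ∀ s, f s ∈ Sym3 := fun s => by
    by_cases hs : s ∈ Ioc 0 t
    · simpa [f, hs] using hGs s
    · simpa [f, hs] using zero_mem_sym3
  have hφf : φ ∘ f = (Ioc 0 t).indicator (φ ∘ G) := (indicator_comp_of_zero hφ0).symm
  have hφfi : Integrable (φ ∘ f) (volume.restrict (Ioo 0 T)) := by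
    rw [hφf]; exact hφG.indicator measurableSet_Ioc
  have hφfG : ∀ s, φ (f s) ≤ φ (G s) := fun s => by
    by_cases hs : s ∈ Ioc 0 t
    · simp [f, hs]
    · simpa [f, hs, hφ0] using hφnn (G s)
  have hint : ∫ s in Ioo 0 T, f s = ∫ s in Ioc 0 t, G s := by
    rw [integral_indicator measurableSet_Ioc, Measure.restrict_restrict measurableSet_Ioc,
      inter_eq_left.mpr hsub]
  have hjensen := hφ.map_integral_le_of_two_smul_le hφc isClosed_sym3 zero_mem_sym3 hφ0
    (fun ξ _ => hφnn ξ) hc (fun _ => two_smul_mem_sym3) hΔ (by simpa [hT.le])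
    (ae_of_all _ hfs) (hGi.indicator measurableSet_Ioc) hφfi
  rw [hint, average_eq, measureReal_restrict_apply_univ, Real.volume_real_Ioo_of_le
    hT.le, sub_zero, smul_eq_mul] at hjensen
  rw [of_intervalIntegral_eq_setIntegral ht.1.le (hGi.mono_set hsub)]
  refine hjensen.trans ?_
  gcongr c ^ d * (T⁻¹ * ?_) + _
  exact integral_mono hφfi hφG hφfG

theorem setLIntegral_modular_intervalIntegral_le (hφ : ConvexOn ℝ Sym3 φ)
    (hφc : ContinuousOn φ Sym3) (hφ0 : φ 0 = 0) (hφnn : ∀ ξ, 0 ≤ φ ξ)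
    (hφtop : Tendsto (fun ξ => φ ξ / mnorm ξ) (comap mnorm atTop ⊓ 𝓟 Sym3) atTop) (hc : 0 ≤ c)
    (hb : 0 ≤ b) (hΔ : ∀ ξ ∈ Sym3, φ ((2 : ℝ) • ξ) ≤ c * φ ξ + b) (hT : 0 < T)
    (hTd : T ≤ 2 ^ d) (hG : Measurable G) (hGs : ∀ s, G s ∈ Sym3)
    (hJ : ∫⁻ s in Ioo 0 T, ENNReal.ofReal (φ (G s)) < ⊤) :
    ∫⁻ t in Ioo 0 T, ENNReal.ofReal (φ (Matrix.of fun j k => ∫ s in (0 : ℝ)..t, G s j k)) ≤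
      ENNReal.ofReal (c ^ d) * (∫⁻ s in Ioo 0 T, ENNReal.ofReal (φ (G s))) +
        ENNReal.ofReal (2 ^ d * (∑ i ∈ Finset.range d, c ^ i) * b) := by
  set K := ∑ i ∈ Finset.range d, c ^ i
  have hK : 0 ≤ K := Finset.sum_nonneg fun i _ => pow_nonneg hc i
  have hφG : IntegrableOn (φ ∘ G) (Ioo 0 T) :=
    ⟨(hφc.measurable_comp_sym3 hG hGs).aestronglyMeasurable,
      (hasFiniteIntegral_iff_ofReal (ae_of_all _ fun s => hφnn _)).mpr hJ⟩
  -- Superlinear growth of `φ` makes `G` integrable, so that `∫₀ᵗ G` is not a junk value.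
  obtain ⟨R, hR⟩ := exists_le_add_of_tendsto_div_atTop (fun ξ _ => hφnn ξ) hφtop
  have hGi : IntegrableOn G (Ioo 0 T) :=
    ((integrableOn_const measure_Ioo_lt_top.ne).add hφG).mono' hG.aestronglyMeasurable
      (ae_of_all _ fun s => (norm_le_mnorm (G s)).trans (hR _ (hGs s)))
  set I := ∫ s in Ioo 0 T, φ (G s)
  have hI : ENNReal.ofReal I = ∫⁻ s in Ioo 0 T, ENNReal.ofReal (φ (G s)) :=
    ofReal_integral_eq_lintegral_ofReal hφG (ae_of_all _ fun s => hφnn _)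
  have hI0 : 0 ≤ I := setIntegral_nonneg measurableSet_Ioo fun s _ => hφnn _
  rw [← hI]
  calc ∫⁻ t in Ioo 0 T, ENNReal.ofReal (φ (Matrix.of fun j k => ∫ s in (0 : ℝ)..t, G s j k))
      ≤ ∫⁻ t in Ioo 0 T, ENNReal.ofReal (c ^ d * (T⁻¹ * I) + K * b) :=
        setLIntegral_mono measurable_const fun t ht => ENNReal.ofReal_le_ofReal <|
          modular_intervalIntegral_le hφ hφc hφ0 hφnn hc hΔ hTd hGs hGi hφG ht
    _ = ENNReal.ofReal (c ^ d * I + T * K * b) := by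
        rw [setLIntegral_const, Real.volume_Ioo, sub_zero, ← ENNReal.ofReal_mul (by positivity)]
        congr 1
        field_simp
    _ ≤ ENNReal.ofReal (c ^ d * I + 2 ^ d * K * b) := by gcongr
    _ ≤ ENNReal.ofReal (c ^ d) * ENNReal.ofReal I + ENNReal.ofReal (2 ^ d * K * b) := by
        rw [← ENNReal.ofReal_mul (pow_nonneg hc d)]
        exact ENNReal.ofReal_add_le

end Fibre

/-- **Time-integral modular estimate**: if `M*` satisfies the `Δ₂`-condition with
constant `c` and function `h`, `T ≤ 2^d`, and `∫_Q M*(x, g) dx dt < ∞`, then there is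
a constant `C(d)` depending only on `d` and `c` with
`∫_Q M*(x, ∫₀ᵗ g(x,s) ds) dx dt ≤ c^d ∫_Q M*(x,g) dx dt + C(d) ∫_Ω h dx`. -/
theorem time_integral_modular_estimate (c : ℝ) (d : ℕ) :
    ∃ C : ℝ, 0 ≤ C ∧
      ∀ (Ω : Set E3), IsOpen Ω → Bornology.IsBounded Ω →
      ∀ T : ℝ, 0 < T → T ≤ 2 ^ d →
      ∀ Mstar : E3 → Mat3 → ℝ, IsNFunction Ω Mstar →
      ∀ h : E3 → ℝ, (∀ x, 0 ≤ h x) → IntegrableOn h Ω →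
      (∀ᵐ x ∂(volume.restrict Ω), ∀ ξ ∈ Sym3,
        Mstar x ((2 : ℝ) • ξ) ≤ c * Mstar x ξ + h x) →
      ∀ g : E3 × ℝ → Mat3, Measurable g → (∀ q, g q ∈ Sym3) →
      (∫⁻ q in Ω ×ˢ Ioo (0:ℝ) T, ENNReal.ofReal (Mstar q.1 (g q)) < ⊤) →
      ∫⁻ q in Ω ×ˢ Ioo (0:ℝ) T,
          ENNReal.ofReal (Mstar q.1
            (Matrix.of fun j k => ∫ s in (0:ℝ)..q.2, g (q.1, s) j k)) ≤
        ENNReal.ofReal (c ^ d) *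
            (∫⁻ q in Ω ×ˢ Ioo (0:ℝ) T, ENNReal.ofReal (Mstar q.1 (g q))) +
          ENNReal.ofReal (C * ∫ x in Ω, h x) := by
  set c' := max c 0 with hc'_def
  set K := ∑ i ∈ Finset.range d, c' ^ i
  have hK : 0 ≤ K := Finset.sum_nonneg fun i _ => pow_nonneg (le_max_right c 0) i
  refine ⟨2 ^ d * K, by positivity, ?_⟩
  intro Ω hΩ _ T hT hTd M hM h hh hhi hΔ g hg hgs hfin
  have hMg : Measurable fun q : E3 × ℝ => M q.1 (g q) :=
    measurable_caratheodory_comp hM.meas hM.cont measurable_fst hg hgs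
  -- The iterated doubling bound needs a nonnegative constant, hence `c' = max c 0`.
  have hcd : ENNReal.ofReal (c' ^ d) ≤ ENNReal.ofReal (c ^ d) := by
    rcases le_total 0 c with hc | hc
    · rw [hc'_def, max_eq_left hc]
    · rcases d.eq_zero_or_pos with rfl | hd
      · simp
      · simp [hc'_def, max_eq_right hc, zero_pow hd.ne']
  have hhC : ∫⁻ x in Ω, ENNReal.ofReal (2 ^ d * K * h x) =
      ENNReal.ofReal (2 ^ d * K * ∫ x in Ω, h x) := by
    rw [← integral_const_mul, ofReal_integral_eq_lintegral_ofReal (hhi.const_mul _)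
      (ae_of_all _ fun x => by have := hh x; positivity)]
  rw [Measure.volume_eq_prod] at hfin ⊢
  refine (setLIntegral_prod_le_of_ae_le (a := ENNReal.ofReal (c' ^ d))
    (k := fun x => ENNReal.ofReal (2 ^ d * K * h x)) hMg.ennreal_ofReal.aemeasurable hfin.ne
    ?_).trans ?_
  · filter_upwards [hΔ, ae_restrict_mem hΩ.measurableSet] with x hΔx hx hJx
    refine setLIntegral_modular_intervalIntegral_le (hM.convexOn x) (hM.cont x)
      ((hM.zero_iff x hx 0 zero_mem_sym3).mpr rfl) (hM.nonneg x) (hM.tendsto_top x hx)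
      (le_max_right c 0) (hh x) (fun ξ hξ => ?_) hT hTd (hg.comp measurable_prodMk_left)
      (fun s => hgs _) hJx
    exact (hΔx ξ hξ).trans (by gcongr; exacts [hM.nonneg x ξ, le_max_left c 0])
  · rw [hhC]
    gcongr
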